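/- Let m > 1 be a deficient number, k > 2 an integer, and p_1, …, p_k primes with σ(m) + 1 < p_1 < ⋯ < p_k. Let h* = ⌊(p_1 − σ(m))/(p_k − p_1)⌋ and U = ⋃_{j=0}^{h*} { n ∈ ℕ : j·p_k + σ(m) < n < (j+1)·p_1 }. Suppose w = m·p_1⋯p_k is abundant, Δ(w) ∈ U, and Δ(w) < p_k. Then, setting w̃ = m·p_1⋯p_{k−1}: (a) w̃ is deficient; (b) p_k < 2w̃/d(w̃) − 1; and (c) Δ(w) belongs to U' = ⋃_{j=0}^{h'} { n ∈ ℕ : j·p_{k−1} + σ(m) < n < (j+1)·p_1 } where h' = ⌊(p_1 − σ(m))/(p_{k−1} − p_1)⌋. -/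
import Mathlib


/-- `sigma' n` is the sum of all divisors of `n` (including `n`). -/
def sigma' (n : ℕ) : ℕ := ∑ d ∈ n.divisors, d

/-- A natural number is abundant if `σ(n) > 2n`. -/
def Abundant (n : ℕ) : Prop := 2 * n < sigma' n

/-- A natural number is deficient if `σ(n) < 2n`. -/
def Deficient (n : ℕ) : Prop := sigma' n < 2 * n

/-- A natural number is semiperfect if it is the sum of some set of
its distinct proper divisors. -/
def Semiperfect (n : ℕ) : Prop := ∃ S ⊆ n.properDivisors, ∑ d ∈ S, d = n

/-- A natural number is weird if it is abundant but not semiperfect. -/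
def Weird (n : ℕ) : Prop := Abundant n ∧ ¬ Semiperfect n

lemma sigma'_mul {a b : ℕ} (h : Nat.Coprime a b) : sigma' (a * b) = sigma' a * sigma' b :=
  Nat.Coprime.sum_divisors_mul h

lemma sigma'_prime {q : ℕ} (hq : q.Prime) : sigma' q = q + 1 := by
  rw [sigma', hq.divisors]
  rw [Finset.sum_insert (by simp [hq.one_lt.ne]), Finset.sum_singleton]
  omega

lemma sigma'_ge {n : ℕ} (hn : 0 < n) : n ≤ sigma' n :=
  Finset.single_le_sum (fun i _ => Nat.zero_le i) (Nat.mem_divisors_self n hn.ne')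


/-- Remark after the main theorem.  In the setting of the main theorem with `k > 2`,
if `w = m · p 0 ⋯ p (k-1)` is abundant, `Δ(w) ∈ U`, and `Δ(w) < p (k-1)`, then
setting `w̃ = m · p 0 ⋯ p (k-2)`: (a) `w̃` is deficient; (b)
`p (k-1) < 2w̃/d(w̃) − 1`; and (c) `Δ(w)` lies in the set `U'` built from
`h' = ⌊(p 0 − σ(m)) / (p (k-2) − p 0)⌋`. -/
theorem remark_conditions_transfer (m k : ℕ) (p : ℕ → ℕ) (w wt : ℕ)
    (hm : 1 < m) (hdef : Deficient m) (hk : 2 < k)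
    (hprime : ∀ i < k, (p i).Prime)
    (hmono : ∀ i j, i < j → j < k → p i < p j)
    (hp1 : sigma' m + 1 < p 0)
    (hw : w = m * ∏ i ∈ Finset.range k, p i)
    (hwt : wt = m * ∏ i ∈ Finset.range (k - 1), p i)
    (hab : Abundant w)
    (hU : ∃ j ≤ (p 0 - sigma' m) / (p (k - 1) - p 0),
      j * p (k - 1) + sigma' m < sigma' w - 2 * w ∧
        sigma' w - 2 * w < (j + 1) * p 0)
    (hΔ : sigma' w - 2 * w < p (k - 1)) :
    Deficient wt ∧
    (p (k - 1) : ℚ) < 2 * wt / (2 * wt - sigma' wt) - 1 ∧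
    ∃ j ≤ (p 0 - sigma' m) / (p (k - 2) - p 0),
      j * p (k - 2) + sigma' m < sigma' w - 2 * w ∧
        sigma' w - 2 * w < (j + 1) * p 0 := by
  have hm0 : 0 < m := by omega
  have hσm : m ≤ sigma' m := sigma'_ge hm0
  have hP : (p (k - 1)).Prime := hprime (k - 1) (by omega)
  have hp0P : p 0 < p (k - 1) := hmono 0 (k - 1) (by omega) (by omega)
  -- coprimality of wt and p (k-1)
  have hcopm : Nat.Coprime (p (k - 1)) m := by
    refine (Nat.Prime.coprime_iff_not_dvd hP).2 fun hdvd => ?_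
    have := Nat.le_of_dvd hm0 hdvd
    omega
  have hcopprod : Nat.Coprime (p (k - 1)) (∏ i ∈ Finset.range (k - 1), p i) := by
    apply Nat.Coprime.prod_right
    intro i hi
    simp only [Finset.mem_range] at hi
    exact (Nat.coprime_primes hP (hprime i (by omega))).2
      (hmono i (k - 1) hi (by omega)).ne'
  have hcop : Nat.Coprime wt (p (k - 1)) := by
    rw [hwt]
    exact (Nat.Coprime.mul_right hcopm hcopprod).symm
  have hw' : w = wt * p (k - 1) := by
    rw [hw, hwt, mul_assoc]
    congr 1
    rw [← Finset.prod_range_succ]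
    congr 2
    omega
  have hsw : sigma' w = sigma' wt * (p (k - 1) + 1) := by
    rw [hw', sigma'_mul hcop, sigma'_prime hP]
  -- positivity of wt
  have hwt0 : 0 < wt := by
    rw [hwt]
    exact Nat.mul_pos hm0 (Finset.prod_pos fun i hi =>
      (hprime i (by simp only [Finset.mem_range] at hi; omega)).pos)
  -- lower bound on wt
  have hp01 : p 0 < p 1 := hmono 0 1 (by omega) (by omega)
  have hp0pos : 0 < p 0 := (hprime 0 (by omega)).pos
  have hprodlb : p 0 * p 1 ≤ ∏ i ∈ Finset.range (k - 1), p i := by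
    have hsub : ({0, 1} : Finset ℕ) ⊆ Finset.range (k - 1) := by
      intro i hi
      simp only [Finset.mem_insert, Finset.mem_singleton] at hi
      simp only [Finset.mem_range]
      omega
    calc p 0 * p 1 = ∏ i ∈ ({0, 1} : Finset ℕ), p i := by
          rw [Finset.prod_insert (by simp), Finset.prod_singleton]
      _ ≤ ∏ i ∈ Finset.range (k - 1), p i :=
          Finset.prod_le_prod_of_subset_of_one_le' hsub
            (fun i hi _ => (hprime i (by simp only [Finset.mem_range] at hi; omega)).one_lt.le)
  have hwtlb : 2 * (p 0 * p 1) ≤ wt := by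
    rw [hwt]
    calc 2 * (p 0 * p 1) ≤ m * (p 0 * p 1) := by
          exact Nat.mul_le_mul_right _ hm
      _ ≤ m * ∏ i ∈ Finset.range (k - 1), p i := Nat.mul_le_mul_left m hprodlb
  obtain ⟨j, hjle, hjlo, hjhi⟩ := hU
  -- bound on j
  have hj_p0 : j + 1 ≤ p 0 := by
    have h1 : j ≤ p 0 - sigma' m := le_trans hjle (Nat.div_le_self _ _)
    omega
  -- (a)
  have hdefwt : Deficient wt := by
    by_contra hcon
    rw [Deficient, not_lt] at hcon
    have hΔlb : 2 * wt ≤ sigma' w - 2 * w := by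
      have h2 : 2 * w + 2 * wt ≤ sigma' w := by
        rw [hsw, hw']
        have hmul := Nat.mul_le_mul_right (p (k - 1)) hcon
        have e1 : sigma' wt * (p (k - 1) + 1) = sigma' wt * p (k - 1) + sigma' wt := by ring
        have e2 : 2 * wt * p (k - 1) = 2 * (wt * p (k - 1)) := by ring
        omega
      omega
    have h3 : (j + 1) * p 0 ≤ p 0 * p 0 := Nat.mul_le_mul_right _ hj_p0
    have h4 : p 0 * p 0 ≤ p 0 * p 1 := Nat.mul_le_mul_left _ hp01.le
    have h5 : 0 < p 0 * p 1 := Nat.mul_pos hp0pos (hprime 1 (by omega)).pos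
    omega
  refine ⟨hdefwt, ?_, ?_⟩
  · -- (b)
    have hkey : 2 * wt * p (k - 1) < sigma' wt * (p (k - 1) + 1) := by
      have := hab
      rw [Abundant, hsw, hw'] at this
      calc 2 * wt * p (k - 1) = 2 * (wt * p (k - 1)) := by ring
        _ < sigma' wt * (p (k - 1) + 1) := this
    have hD : (0 : ℚ) < 2 * (wt : ℚ) - (sigma' wt : ℚ) := by
      have := hdefwt
      rw [Deficient] at this
      have : (sigma' wt : ℚ) < 2 * wt := by exact_mod_cast this
      linarith
    rw [lt_sub_iff_add_lt, lt_div_iff₀ hD]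
    have hkeyQ : 2 * (wt : ℚ) * (p (k - 1) : ℚ) < (sigma' wt : ℚ) * ((p (k - 1) : ℚ) + 1) := by
      exact_mod_cast hkey
    nlinarith
  · -- (c)
    have hQ : p 0 < p (k - 2) := hmono 0 (k - 2) (by omega) (by omega)
    have hQP : p (k - 2) < p (k - 1) := hmono (k - 2) (k - 1) (by omega) (by omega)
    refine ⟨j, ?_, ?_, hjhi⟩
    · exact le_trans hjle (Nat.div_le_div_left (by omega) (by omega))
    · have : j * p (k - 2) ≤ j * p (k - 1) := Nat.mul_le_mul_left j hQP.le
      omega
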